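/- Theorem 2 (the parent minimizes the expected squared centered difference of voltage-magnitude deviations among non-descendants): let a be a non-root node whose parent b is also a non-root node. Then for every non-root node c that is not a descendant of a and with c ≠ b, one has W_ε(a,b) < W_ε(a,c); that is, b = argmin over non-root non-descendants c of a of W_ε(a,c). -/

import Mathlib

/-!
Write `Δ_w(c, d) = Σ_{P(a)∩P(d)} w − Σ_{P(c)∩P(d)} w`, so that `W_ε(a,c)` sums, over the nodes
`d`, the covariance quadratic form of `d` at `(Δ_r(c, d), Δ_x(c, d))`. For the parent `b`,
`Δ_w(b, d)` is `w_a` on the descendants `d` of `a` and `0` elsewhere. Since the edges of `P(d)`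
form a chain, one of the sets `P(a)∩P(d) \ P(c)` and `P(c)∩P(d) \ P(a)` is empty, so `Δ_r(c, d)`
and `Δ_x(c, d)` have the same sign and every term of `W_ε(a,c)` is nonnegative. If `c` is not a
descendant of `a`, the edge `a` lies in `P(a)∩P(d) \ P(c)` for every descendant `d` of `a`, so
`Δ_w(c, d) ≥ w_a`: the terms of `W_ε(a,c)` dominate those of `W_ε(a,b)`. Strictness comes from
`d = a` when `c` is a proper ancestor of `b` (then the edge `b` counts too), and from `d = c`
otherwise.
-/
open Finset
open Classical

/-- A finite rooted tree, encoded by its root and parent map: every node reaches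
the root by iterating `parent`, and the root is a fixed point of `parent`.
Each non-root node `v` is identified with the edge `(v, parent v)`, so that
edge weights are functions on non-root nodes. -/
structure DistTree (V : Type) [Fintype V] [DecidableEq V] where
  root : V
  parent : V → V
  parent_root : parent root = root
  reaches_root : ∀ v : V, ∃ n : ℕ, parent^[n] v = root

namespace DistTree

variable {V : Type} [Fintype V] [DecidableEq V]

/-- `a` is a descendant of `b` (i.e. `a ∈ D_b`): `b` lies on the path from `a`
to the root.  Every node is a descendant of itself. -/
def Desc (T : DistTree V) (a b : V) : Prop := ∃ n : ℕ, T.parent^[n] a = b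

/-- `b` is the parent of the (non-root) node `a`: `(a,b)` is an edge of the tree
and `b` lies on the path from `a` to the root. -/
def IsParent (T : DistTree V) (b a : V) : Prop := a ≠ T.root ∧ T.parent a = b

/-- `T.pathSum w a b = Σ_{e ∈ P(a) ∩ P(b)} w_e` : the sum of the edge weights `w`
over the edges common to the path from `a` to the root and the path from `b` to
the root.  An edge `(v, parent v)` (indexed by the non-root node `v`) lies on
`P(a)` iff `a` is a descendant of `v`. -/
noncomputable def pathSum (T : DistTree V) (w : V → ℝ) (a b : V) : ℝ :=
  ∑ v : V, if v ≠ T.root ∧ T.Desc a v ∧ T.Desc b v then w v else 0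

end DistTree

/-- `W_ε(a,b) := Σ_{c ≠ 0} [(R(a,c)−R(b,c))² σp(c) + (X(a,c)−X(b,c))² σq(c)
+ 2 (R(a,c)−R(b,c)) (X(a,c)−X(b,c)) σpq(c)]`: the expected squared centered
difference of voltage-magnitude deviations between `a` and `b` (LC-PF model). -/
noncomputable def Weps {V : Type} [Fintype V] [DecidableEq V]
    (T : DistTree V) (r x σp σq σpq : V → ℝ) (a b : V) : ℝ :=
  ∑ c : V, if c ≠ T.root then
      (T.pathSum r a c - T.pathSum r b c) ^ 2 * σp c
        + (T.pathSum x a c - T.pathSum x b c) ^ 2 * σq c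
        + 2 * (T.pathSum r a c - T.pathSum r b c)
            * (T.pathSum x a c - T.pathSum x b c) * σpq c
    else 0

/-- `W_θ(a,b) := Σ_{c ≠ 0} [(X(a,c)−X(b,c))² σp(c) + (R(a,c)−R(b,c))² σq(c)
− 2 (R(a,c)−R(b,c)) (X(a,c)−X(b,c)) σpq(c)]`: the expected squared centered
difference of voltage phase angles between `a` and `b` (LC-PF model). -/
noncomputable def Wtheta {V : Type} [Fintype V] [DecidableEq V]
    (T : DistTree V) (r x σp σq σpq : V → ℝ) (a b : V) : ℝ :=
  ∑ c : V, if c ≠ T.root then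
      (T.pathSum x a c - T.pathSum x b c) ^ 2 * σp c
        + (T.pathSum r a c - T.pathSum r b c) ^ 2 * σq c
        - 2 * (T.pathSum r a c - T.pathSum r b c)
            * (T.pathSum x a c - T.pathSum x b c) * σpq c
    else 0

/-- `W_{εθ}(a,b) := Σ_{c ≠ 0} [(R(a,c)−R(b,c)) (X(a,c)−X(b,c)) (σp(c) − σq(c))
+ ((X(a,c)−X(b,c))² − (R(a,c)−R(b,c))²) σpq(c)]`: the expected product of the
centered differences of voltage-magnitude deviations and phase angles between
`a` and `b` (LC-PF model). -/
noncomputable def WepsTheta {V : Type} [Fintype V] [DecidableEq V]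
    (T : DistTree V) (r x σp σq σpq : V → ℝ) (a b : V) : ℝ :=
  ∑ c : V, if c ≠ T.root then
      (T.pathSum r a c - T.pathSum r b c) * (T.pathSum x a c - T.pathSum x b c)
          * (σp c - σq c)
        + ((T.pathSum x a c - T.pathSum x b c) ^ 2
            - (T.pathSum r a c - T.pathSum r b c) ^ 2) * σpq c
    else 0

/-- The quadratic form of the covariance matrix `!![p, s; s, q]`, evaluated at `(u, v)`. -/
def covQuadForm (p q s u v : ℝ) : ℝ := u ^ 2 * p + v ^ 2 * q + 2 * u * v * s

section covQuadForm

variable {p q s u v u' v' : ℝ}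

lemma covQuadForm_zero_zero : covQuadForm p q s 0 0 = 0 := by
  simp [covQuadForm]

lemma covQuadForm_nonneg (hp : 0 ≤ p) (hq : 0 ≤ q) (hs : 0 ≤ s) (huv : 0 ≤ u * v) :
    0 ≤ covQuadForm p q s u v := by
  unfold covQuadForm
  nlinarith [mul_nonneg huv hs, mul_nonneg (sq_nonneg u) hp, mul_nonneg (sq_nonneg v) hq]

lemma covQuadForm_pos (hp : 0 < p) (hq : 0 ≤ q) (hs : 0 ≤ s) (hu : u ≠ 0) (huv : 0 ≤ u * v) :
    0 < covQuadForm p q s u v := by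
  have hu2 : 0 < u ^ 2 := by positivity
  unfold covQuadForm
  nlinarith [mul_nonneg huv hs, mul_pos hu2 hp, mul_nonneg (sq_nonneg v) hq]

lemma covQuadForm_le_covQuadForm (hp : 0 ≤ p) (hq : 0 ≤ q) (hs : 0 ≤ s) (hu : 0 ≤ u)
    (huu' : u ≤ u') (hv : 0 ≤ v) (hvv' : v ≤ v') :
    covQuadForm p q s u v ≤ covQuadForm p q s u' v' := by
  have hu' := hu.trans huu'
  unfold covQuadForm
  gcongr

lemma covQuadForm_lt_covQuadForm (hp : 0 < p) (hq : 0 ≤ q) (hs : 0 ≤ s) (hu : 0 ≤ u)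
    (huu' : u < u') (hv : 0 ≤ v) (hvv' : v ≤ v') :
    covQuadForm p q s u v < covQuadForm p q s u' v' := by
  have hu' := hu.trans huu'.le
  have huv : u * v * s ≤ u' * v' * s := by gcongr
  have hvv : v ^ 2 * q ≤ v' ^ 2 * q := by gcongr
  have huu : u ^ 2 * p < u' ^ 2 * p := by gcongr
  unfold covQuadForm
  linarith

end covQuadForm

lemma Weps_eq_sum_covQuadForm {V : Type} [Fintype V] [DecidableEq V] (T : DistTree V)
    (r x σp σq σpq : V → ℝ) (a b : V) :
    Weps T r x σp σq σpq a b = ∑ d, if d ≠ T.root then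
      covQuadForm (σp d) (σq d) (σpq d) (T.pathSum r a d - T.pathSum r b d)
        (T.pathSum x a d - T.pathSum x b d) else 0 :=
  rfl

namespace DistTree

variable {V : Type} [Fintype V] [DecidableEq V] (T : DistTree V)

open Function

lemma eq_root_of_isPeriodicPt {v : V} {n : ℕ} (hn : 0 < n) (hv : IsPeriodicPt T.parent n v) :
    v = T.root := by
  obtain ⟨m, hm⟩ := T.reaches_root v
  have hroot : IsPeriodicPt T.parent n T.root := IsFixedPt.isPeriodicPt T.parent_root n
  exact (hv.iterate m).eq_of_apply_eq_same (hroot.iterate m) hn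
    (by rw [hm, iterate_fixed T.parent_root])

lemma desc_refl (a : V) : T.Desc a a := ⟨0, rfl⟩

lemma desc_trans {a b c : V} (hab : T.Desc a b) (hbc : T.Desc b c) : T.Desc a c := by
  obtain ⟨m, rfl⟩ := hab
  obtain ⟨k, rfl⟩ := hbc
  exact ⟨k + m, iterate_add_apply _ _ _ _⟩

lemma desc_antisymm {a b : V} (hab : T.Desc a b) (hba : T.Desc b a) : a = b := by
  obtain ⟨m, rfl⟩ := hab
  obtain ⟨k, hk⟩ := hba
  rcases Nat.eq_zero_or_pos m with rfl | hm
  · rfl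
  · have ha : a = T.root := T.eq_root_of_isPeriodicPt (n := k + m) (by omega)
      (by rwa [IsPeriodicPt, IsFixedPt, iterate_add_apply])
    rw [ha, iterate_fixed T.parent_root]

lemma desc_total {d u v : V} (hu : T.Desc d u) (hv : T.Desc d v) : T.Desc u v ∨ T.Desc v u := by
  obtain ⟨m, rfl⟩ := hu
  obtain ⟨k, rfl⟩ := hv
  rcases le_total m k with h | h
  · exact Or.inl ⟨k - m, by rw [← iterate_add_apply, Nat.sub_add_cancel h]⟩
  · exact Or.inr ⟨m - k, by rw [← iterate_add_apply, Nat.sub_add_cancel h]⟩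

lemma desc_iff_eq_or_desc_parent {a v : V} : T.Desc a v ↔ v = a ∨ T.Desc (T.parent a) v := by
  constructor
  · rintro ⟨_ | m, hm⟩
    · exact Or.inl hm.symm
    · exact Or.inr ⟨m, by rwa [← iterate_succ_apply]⟩
  · rintro (rfl | ⟨m, hm⟩)
    · exact T.desc_refl v
    · exact ⟨m + 1, by rwa [iterate_succ_apply]⟩

lemma not_desc_parent_self {a : V} (ha : a ≠ T.root) : ¬ T.Desc (T.parent a) a := by
  rintro ⟨m, hm⟩
  exact ha (T.eq_root_of_isPeriodicPt m.succ_pos (by rwa [IsPeriodicPt, IsFixedPt,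
    iterate_succ_apply]))

/-- The edge set `P(a)`, each edge indexed by its lower endpoint. -/
noncomputable def pathEdges (a : V) : Finset V := univ.filter fun v => v ≠ T.root ∧ T.Desc a v

variable {T}

lemma mem_pathEdges {a v : V} : v ∈ T.pathEdges a ↔ v ≠ T.root ∧ T.Desc a v := by
  simp [pathEdges]

lemma pathEdges_of_isParent {a b : V} (hab : T.IsParent b a) :
    T.pathEdges a = insert a (T.pathEdges b) := by
  ext v
  rw [mem_insert, mem_pathEdges, mem_pathEdges, T.desc_iff_eq_or_desc_parent, hab.2]
  constructor
  · rintro ⟨hv, rfl | hbv⟩ <;> tauto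
  · rintro (rfl | ⟨hv, hbv⟩)
    · exact ⟨hab.1, Or.inl rfl⟩
    · exact ⟨hv, Or.inr hbv⟩

lemma inter_pathEdges_subset_or (a c d : V) :
    T.pathEdges a ∩ T.pathEdges d ⊆ T.pathEdges c ∨
      T.pathEdges c ∩ T.pathEdges d ⊆ T.pathEdges a := by
  by_contra! h
  obtain ⟨⟨u, hu, hcu⟩, ⟨v, hv, hav⟩⟩ := And.intro (not_subset.1 h.1) (not_subset.1 h.2)
  simp only [mem_inter, mem_pathEdges] at hu hv hcu hav
  rcases T.desc_total hu.2.2 hv.2.2 with huv | hvu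
  · exact hav ⟨hv.1.1, T.desc_trans hu.1.2 huv⟩
  · exact hcu ⟨hu.1.1, T.desc_trans hv.1.2 hvu⟩

variable {w : V → ℝ}

lemma pathSum_eq_sum_inter (a b : V) :
    T.pathSum w a b = ∑ v ∈ T.pathEdges a ∩ T.pathEdges b, w v := by
  rw [pathSum, ← sum_filter]
  congr 1
  ext v
  simp only [mem_filter, mem_univ, true_and, mem_inter, mem_pathEdges]
  tauto

lemma pathSum_sub_of_isParent {a b : V} (hab : T.IsParent b a) (d : V) :
    T.pathSum w a d - T.pathSum w b d = if T.Desc d a then w a else 0 := by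
  have hab' : a ∉ T.pathEdges b := fun h =>
    T.not_desc_parent_self hab.1 (hab.2 ▸ (mem_pathEdges.1 h).2)
  rw [pathSum_eq_sum_inter, pathSum_eq_sum_inter, pathEdges_of_isParent hab]
  by_cases hda : T.Desc d a
  · rw [insert_inter_of_mem (mem_pathEdges.2 ⟨hab.1, hda⟩),
      sum_insert (fun h => hab' (mem_inter.1 h).1), if_pos hda, add_sub_cancel_right]
  · rw [insert_inter_of_notMem (fun h => hda (mem_pathEdges.1 h).2), if_neg hda, sub_self]

lemma pathSum_sub_pathSum (a c d : V) :
    T.pathSum w a d - T.pathSum w c d =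
      ∑ v ∈ (T.pathEdges a ∩ T.pathEdges d) \ (T.pathEdges c ∩ T.pathEdges d), w v
        - ∑ v ∈ (T.pathEdges c ∩ T.pathEdges d) \ (T.pathEdges a ∩ T.pathEdges d), w v := by
  rw [sum_sdiff_sub_sum_sdiff, pathSum_eq_sum_inter, pathSum_eq_sum_inter]

lemma sum_nonneg_of_subset_pathEdges (hw : ∀ v, v ≠ T.root → 0 ≤ w v) {S : Finset V} {a : V}
    (hS : S ⊆ T.pathEdges a) : 0 ≤ ∑ v ∈ S, w v :=
  sum_nonneg fun v hv => hw v (mem_pathEdges.1 (hS hv)).1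

lemma sum_le_pathSum_sub (hw : ∀ v, v ≠ T.root → 0 ≤ w v) {a c d : V} {S : Finset V}
    (hS : S ⊆ (T.pathEdges a ∩ T.pathEdges d) \ T.pathEdges c)
    (hca : T.pathEdges c ∩ T.pathEdges d ⊆ T.pathEdges a) :
    ∑ v ∈ S, w v ≤ T.pathSum w a d - T.pathSum w c d := by
  have hempty : (T.pathEdges c ∩ T.pathEdges d) \ (T.pathEdges a ∩ T.pathEdges d) = ∅ :=
    sdiff_eq_empty_iff_subset.2 (subset_inter hca inter_subset_right)
  rw [pathSum_sub_pathSum, hempty, sum_empty, sub_zero]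
  refine sum_le_sum_of_subset_of_nonneg (hS.trans ?_) fun v hv _ => ?_
  · exact sdiff_subset_sdiff subset_rfl inter_subset_left
  · exact hw v (mem_pathEdges.1 (mem_inter.1 (mem_sdiff.1 hv).1).1).1

/-- The edges of `P(d)` form a chain, so one of the two sums in `pathSum_sub_pathSum` vanishes. -/
lemma pathSum_sub_mul_nonneg {r x : V → ℝ} (hr : ∀ v, v ≠ T.root → 0 ≤ r v)
    (hx : ∀ v, v ≠ T.root → 0 ≤ x v) (a c d : V) :
    0 ≤ (T.pathSum r a d - T.pathSum r c d) * (T.pathSum x a d - T.pathSum x c d) := by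
  have hsub : ∀ {a c : V}, (T.pathEdges a ∩ T.pathEdges d) \ (T.pathEdges c ∩ T.pathEdges d) ⊆
      T.pathEdges a := fun {_ _} => sdiff_subset.trans inter_subset_left
  rw [pathSum_sub_pathSum, pathSum_sub_pathSum]
  rcases inter_pathEdges_subset_or a c d with h | h
  · rw [sdiff_eq_empty_iff_subset.2 (subset_inter h inter_subset_right), sum_empty, sum_empty,
      zero_sub, zero_sub]
    exact mul_nonneg_of_nonpos_of_nonpos
      (neg_nonpos.2 (sum_nonneg_of_subset_pathEdges hr hsub))
      (neg_nonpos.2 (sum_nonneg_of_subset_pathEdges hx hsub))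
  · rw [sdiff_eq_empty_iff_subset.2 (subset_inter h inter_subset_right), sum_empty, sum_empty,
      sub_zero, sub_zero]
    exact mul_nonneg (sum_nonneg_of_subset_pathEdges hr hsub)
      (sum_nonneg_of_subset_pathEdges hx hsub)

variable {r x : V → ℝ} {p q s : ℝ} {a b c d : V}

lemma le_pathSum_sub_of_desc (hw : ∀ v, v ≠ T.root → 0 ≤ w v) (ha : a ≠ T.root)
    (hnd : ¬ T.Desc c a) (hda : T.Desc d a) : w a ≤ T.pathSum w a d - T.pathSum w c d := by
  have ha' : a ∈ (T.pathEdges a ∩ T.pathEdges d) \ T.pathEdges c := by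
    simp only [mem_sdiff, mem_inter, mem_pathEdges]
    exact ⟨⟨⟨ha, T.desc_refl a⟩, ha, hda⟩, fun h => hnd h.2⟩
  have hca : T.pathEdges c ∩ T.pathEdges d ⊆ T.pathEdges a :=
    (inter_pathEdges_subset_or a c d).resolve_left fun h =>
      (mem_sdiff.1 ha').2 (h (mem_sdiff.1 ha').1)
  simpa using sum_le_pathSum_sub hw (singleton_subset_iff.2 ha') hca

lemma covQuadForm_parent_le (hr : ∀ v, v ≠ T.root → 0 ≤ r v) (hx : ∀ v, v ≠ T.root → 0 ≤ x v)
    (hp : 0 ≤ p) (hq : 0 ≤ q) (hs : 0 ≤ s) (hab : T.IsParent b a) (hnd : ¬ T.Desc c a) :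
    covQuadForm p q s (T.pathSum r a d - T.pathSum r b d) (T.pathSum x a d - T.pathSum x b d) ≤
      covQuadForm p q s (T.pathSum r a d - T.pathSum r c d)
        (T.pathSum x a d - T.pathSum x c d) := by
  rw [pathSum_sub_of_isParent hab, pathSum_sub_of_isParent hab]
  split_ifs with hda
  · exact covQuadForm_le_covQuadForm hp hq hs (hr a hab.1)
      (le_pathSum_sub_of_desc hr hab.1 hnd hda) (hx a hab.1)
      (le_pathSum_sub_of_desc hx hab.1 hnd hda)
  · rw [covQuadForm_zero_zero]
    exact covQuadForm_nonneg hp hq hs (pathSum_sub_mul_nonneg hr hx a c d)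

/-- If `c` is a proper ancestor of `b`, then both edges `a` and `b` separate `a` from `c`. -/
lemma covQuadForm_parent_lt_of_desc (hr : ∀ v, v ≠ T.root → 0 ≤ r v)
    (hx : ∀ v, v ≠ T.root → 0 ≤ x v) (hrb : 0 < r b) (hp : 0 < p) (hq : 0 ≤ q) (hs : 0 ≤ s)
    (hab : T.IsParent b a) (hb : b ≠ T.root) (hnd : ¬ T.Desc c a) (hcb : c ≠ b)
    (hac : T.Desc a c) :
    covQuadForm p q s (T.pathSum r a a - T.pathSum r b a) (T.pathSum x a a - T.pathSum x b a) <
      covQuadForm p q s (T.pathSum r a a - T.pathSum r c a)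
        (T.pathSum x a a - T.pathSum x c a) := by
  have hbc : T.Desc b c := by
    rcases T.desc_iff_eq_or_desc_parent.1 hac with rfl | h
    · exact absurd (T.desc_refl c) hnd
    · rwa [hab.2] at h
  have hne : a ≠ b := fun h =>
    T.not_desc_parent_self hab.1 (by rw [hab.2, ← h]; exact T.desc_refl a)
  have hS : {a, b} ⊆ (T.pathEdges a ∩ T.pathEdges a) \ T.pathEdges c := by
    intro v hv
    simp only [mem_insert, mem_singleton] at hv
    simp only [mem_sdiff, inter_self, mem_pathEdges]
    rcases hv with rfl | rfl
    · exact ⟨⟨hab.1, T.desc_refl v⟩, fun h => hnd h.2⟩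
    · exact ⟨⟨hb, 1, hab.2⟩, fun h => hcb (T.desc_antisymm h.2 hbc)⟩
  have hr' := sum_le_pathSum_sub hr hS inter_subset_right
  rw [sum_pair hne] at hr'
  rw [pathSum_sub_of_isParent hab, pathSum_sub_of_isParent hab, if_pos (T.desc_refl a),
    if_pos (T.desc_refl a)]
  exact covQuadForm_lt_covQuadForm hp hq hs (hr a hab.1) (by linarith) (hx a hab.1)
    (le_pathSum_sub_of_desc hx hab.1 hnd (T.desc_refl a))

lemma covQuadForm_parent_lt_of_not_desc (hr : ∀ v, v ≠ T.root → 0 ≤ r v)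
    (hx : ∀ v, v ≠ T.root → 0 ≤ x v) (hrc : 0 < r c) (hp : 0 < p) (hq : 0 ≤ q) (hs : 0 ≤ s)
    (hab : T.IsParent b a) (hc : c ≠ T.root) (hnd : ¬ T.Desc c a) (hac : ¬ T.Desc a c) :
    covQuadForm p q s (T.pathSum r a c - T.pathSum r b c) (T.pathSum x a c - T.pathSum x b c) <
      covQuadForm p q s (T.pathSum r a c - T.pathSum r c c)
        (T.pathSum x a c - T.pathSum x c c) := by
  rw [pathSum_sub_of_isParent hab, pathSum_sub_of_isParent hab, if_neg hnd, if_neg hnd,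
    covQuadForm_zero_zero]
  have hrc' := le_pathSum_sub_of_desc hr hc hac (T.desc_refl c)
  exact covQuadForm_pos hp hq hs (by linarith : _ < (0 : ℝ)).ne
    (pathSum_sub_mul_nonneg hr hx a c c)

end DistTree

/-- **Theorem 2.** The parent minimizes the expected squared
centered difference of voltage-magnitude deviations among non-descendants: if
`a` is a non-root node whose parent `b` is also non-root, then for every
non-root node `c` that is not a descendant of `a` and with `c ≠ b`, one has
`W_ε(a,b) < W_ε(a,c)`. -/
theorem Weps_parent_is_argmin {V : Type} [Fintype V] [DecidableEq V]
    (T : DistTree V) (r x σp σq σpq : V → ℝ)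
    (hr : ∀ v, v ≠ T.root → 0 < r v) (hx : ∀ v, v ≠ T.root → 0 < x v)
    (hσp : ∀ v, v ≠ T.root → 0 < σp v) (hσq : ∀ v, v ≠ T.root → 0 < σq v)
    (hσpq : ∀ v, v ≠ T.root → 0 < σpq v)
    (a b : V) (hab : T.IsParent b a) (hb : b ≠ T.root)
    (c : V) (hc : c ≠ T.root) (hnd : ¬ T.Desc c a) (hcb : c ≠ b) :
    Weps T r x σp σq σpq a b < Weps T r x σp σq σpq a c := by
  have hr0 : ∀ v, v ≠ T.root → 0 ≤ r v := fun v hv => (hr v hv).le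
  have hx0 : ∀ v, v ≠ T.root → 0 ≤ x v := fun v hv => (hx v hv).le
  rw [Weps_eq_sum_covQuadForm, Weps_eq_sum_covQuadForm]
  refine sum_lt_sum (fun d _ => ?_) ?_
  · split_ifs with hd
    · exact DistTree.covQuadForm_parent_le hr0 hx0 (hσp d hd).le (hσq d hd).le (hσpq d hd).le
        hab hnd
    · exact le_rfl
  · by_cases hac : T.Desc a c
    · refine ⟨a, mem_univ a, ?_⟩
      rw [if_pos hab.1, if_pos hab.1]
      exact DistTree.covQuadForm_parent_lt_of_desc hr0 hx0 (hr b hb) (hσp a hab.1)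
        (hσq a hab.1).le (hσpq a hab.1).le hab hb hnd hcb hac
    · refine ⟨c, mem_univ c, ?_⟩
      rw [if_pos hc, if_pos hc]
      exact DistTree.covQuadForm_parent_lt_of_not_desc hr0 hx0 (hr c hc) (hσp c hc)
        (hσq c hc).le (hσpq c hc).le hab hc hnd hac
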